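/- arXiv:1205.4442 — 2 statements merged into one kernel-verified Lean document; each statement's English description precedes it below -/
import Mathlib

section
/- For every word w ∈ {0,1}^n, the restriction of M_w to the plane {x+y+z = 0} has operator norm at most (3/5)^n; equivalently, ‖M_w·u⃗‖ ≤ (3/5)^n·‖u⃗‖ for all u⃗ with coordinates summing to 0. -/
/-
On the plane `x + y + z = 0`, which both `M₀` and `M₁` preserve (their columns sum to `1`),
each letter contracts the Euclidean norm by `3/5`: eliminating `z`, one finds
`9 ‖u‖² - 25 ‖M₀ u‖² = 4 (x + 2y)²` and `9 ‖u‖² - 25 ‖M₁ u‖² = 4 (2x + y)²`.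
Iterating along the word gives the factor `(3/5)^n`.
-/

noncomputable def M0 : Matrix (Fin 3) (Fin 3) ℝ :=
  (1/5 : ℝ) • !![5, 2, 2; 0, 2, 1; 0, 1, 2]

noncomputable def M1 : Matrix (Fin 3) (Fin 3) ℝ :=
  (1/5 : ℝ) • !![2, 0, 1; 2, 5, 2; 1, 0, 2]

noncomputable def Mbit (b : Bool) : Matrix (Fin 3) (Fin 3) ℝ :=
  if b then M1 else M0

noncomputable def Mword (w : List Bool) : Matrix (Fin 3) (Fin 3) ℝ :=
  (w.map Mbit).prod

noncomputable def norm2 (v : Fin 3 → ℝ) : ℝ :=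
  Real.sqrt (v 0 ^ 2 + v 1 ^ 2 + v 2 ^ 2)

open Matrix

section ListProd

variable {ι R : Type*} [Fintype ι] [DecidableEq ι] [Semiring R]

theorem Matrix.list_prod_mulVec_mem {S : Set (ι → R)} {Ms : List (Matrix ι ι R)}
    (hS : ∀ A ∈ Ms, ∀ v ∈ S, A *ᵥ v ∈ S) {v : ι → R} (hv : v ∈ S) :
    Ms.prod *ᵥ v ∈ S := by
  induction Ms with
  | nil => simpa using hv
  | cons A Ms ih =>
    obtain ⟨hA, hS⟩ := List.forall_mem_cons.mp hS
    rw [List.prod_cons, ← mulVec_mulVec]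
    exact hA _ (ih hS)

theorem Matrix.list_prod_mulVec_le {S : Set (ι → R)} {N : (ι → R) → ℝ} {c : ℝ} (hc : 0 ≤ c)
    {Ms : List (Matrix ι ι R)} (hS : ∀ A ∈ Ms, ∀ v ∈ S, A *ᵥ v ∈ S)
    (hN : ∀ A ∈ Ms, ∀ v ∈ S, N (A *ᵥ v) ≤ c * N v) {v : ι → R} (hv : v ∈ S) :
    N (Ms.prod *ᵥ v) ≤ c ^ Ms.length * N v := by
  induction Ms with
  | nil => simp
  | cons A Ms ih =>
    obtain ⟨-, hS⟩ := List.forall_mem_cons.mp hS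
    obtain ⟨hA, hN⟩ := List.forall_mem_cons.mp hN
    rw [List.prod_cons, ← mulVec_mulVec, List.length_cons, pow_succ', mul_assoc]
    calc N (A *ᵥ (Ms.prod *ᵥ v))
        ≤ c * N (Ms.prod *ᵥ v) := hA _ (list_prod_mulVec_mem hS hv)
      _ ≤ c * (c ^ Ms.length * N v) := mul_le_mul_of_nonneg_left (ih hS hN) hc

end ListProd

def sumZeroPlane : Set (Fin 3 → ℝ) := {v | v 0 + v 1 + v 2 = 0}

theorem mem_sumZeroPlane {v : Fin 3 → ℝ} : v ∈ sumZeroPlane ↔ v 0 + v 1 + v 2 = 0 := Iff.rfl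

theorem M0_mulVec (u : Fin 3 → ℝ) :
    M0 *ᵥ u = ![(5 * u 0 + 2 * u 1 + 2 * u 2) / 5, (2 * u 1 + u 2) / 5, (u 1 + 2 * u 2) / 5] := by
  ext i
  fin_cases i <;> simp [M0, mulVec, dotProduct, Fin.sum_univ_three] <;> ring

theorem M1_mulVec (u : Fin 3 → ℝ) :
    M1 *ᵥ u = ![(2 * u 0 + u 2) / 5, (2 * u 0 + 5 * u 1 + 2 * u 2) / 5, (u 0 + 2 * u 2) / 5] := by
  ext i
  fin_cases i <;> simp [M1, mulVec, dotProduct, Fin.sum_univ_three] <;> ring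

theorem Mbit_mulVec_mem_sumZeroPlane (b : Bool) {u : Fin 3 → ℝ} (hu : u ∈ sumZeroPlane) :
    Mbit b *ᵥ u ∈ sumZeroPlane := by
  rw [mem_sumZeroPlane] at hu ⊢
  cases b
  · simp only [Mbit, Bool.false_eq_true, ↓reduceIte, M0_mulVec, cons_val_zero, cons_val_one,
      cons_val]
    linarith
  · simp only [Mbit, ↓reduceIte, M1_mulVec, cons_val_zero, cons_val_one, cons_val]
    linarith

theorem norm2_le_mul_norm2_of_sq_le {v u : Fin 3 → ℝ} {c : ℝ} (hc : 0 ≤ c)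
    (h : v 0 ^ 2 + v 1 ^ 2 + v 2 ^ 2 ≤ c ^ 2 * (u 0 ^ 2 + u 1 ^ 2 + u 2 ^ 2)) :
    norm2 v ≤ c * norm2 u := by
  rw [norm2, norm2, ← Real.sqrt_sq hc, ← Real.sqrt_mul (sq_nonneg c)]
  exact Real.sqrt_le_sqrt h

theorem norm2_Mbit_mulVec_le (b : Bool) {u : Fin 3 → ℝ} (hu : u ∈ sumZeroPlane) :
    norm2 (Mbit b *ᵥ u) ≤ 3 / 5 * norm2 u := by
  have hz : u 2 = -u 0 - u 1 := by linarith [mem_sumZeroPlane.mp hu]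
  apply norm2_le_mul_norm2_of_sq_le (by norm_num)
  cases b
  · simp only [Mbit, Bool.false_eq_true, ↓reduceIte, M0_mulVec, cons_val_zero, cons_val_one,
      cons_val]
    rw [hz]
    nlinarith [sq_nonneg (u 0 + 2 * u 1)]
  · simp only [Mbit, ↓reduceIte, M1_mulVec, cons_val_zero, cons_val_one, cons_val]
    rw [hz]
    nlinarith [sq_nonneg (2 * u 0 + u 1)]

theorem stmt_12 (w : List Bool) (u : Fin 3 → ℝ) (hu : u 0 + u 1 + u 2 = 0) :
    norm2 ((Mword w).mulVec u) ≤ (3/5 : ℝ) ^ w.length * norm2 u := by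
  have hS : ∀ A ∈ w.map Mbit, ∀ v ∈ sumZeroPlane, A *ᵥ v ∈ sumZeroPlane :=
    List.forall_mem_map.mpr fun b _ _ => Mbit_mulVec_mem_sumZeroPlane b
  have hN : ∀ A ∈ w.map Mbit, ∀ v ∈ sumZeroPlane, norm2 (A *ᵥ v) ≤ 3 / 5 * norm2 v :=
    List.forall_mem_map.mpr fun b _ _ => norm2_Mbit_mulVec_le b
  simpa only [Mword, List.length_map] using list_prod_mulVec_le (by norm_num) hS hN (mem_sumZeroPlane.mpr hu)
end

section
/- For every u⃗ in the cone K⃗ = {a·v⃗_0 + b·v⃗_1 : a,b ≥ 0, (a,b)≠(0,0)}, every i ∈ {0,1}, and every n ∈ ℕ, one has ‖M_i^n·u⃗‖₂ ≥ (1/2)·(3/5)^n·‖u⃗‖₂. -/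
noncomputable def v0 : Fin 3 → ℝ := ![-1, 1/2, 1/2]
noncomputable def v1 : Fin 3 → ℝ := ![-1/2, 1, -1/2]

noncomputable def Kvec : Set (Fin 3 → ℝ) :=
  {u | ∃ a b : ℝ, 0 ≤ a ∧ 0 ≤ b ∧ (a, b) ≠ (0, 0) ∧ u = a • v0 + b • v1}

open Matrix

section Triangular

variable {𝕜 ι : Type*} [Field 𝕜] [Fintype ι] [DecidableEq ι] {M : Matrix ι ι 𝕜} {x y : ι → 𝕜}
  {p r c : 𝕜}

theorem pow_mulVec_of_mulVec_eq_smul (hx : M *ᵥ x = p • x) (n : ℕ) :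
    (M ^ n) *ᵥ x = p ^ n • x := by
  induction n with
  | zero => simp
  | succ n ih => rw [pow_succ, ← mulVec_mulVec, hx, mulVec_smul, ih, smul_smul, pow_succ']

theorem pow_mulVec_of_mulVec_eq_smul_add_smul (hpr : p ≠ r) (hx : M *ᵥ x = p • x)
    (hy : M *ᵥ y = c • x + r • y) (n : ℕ) :
    (M ^ n) *ᵥ y = (c * (p ^ n - r ^ n) / (p - r)) • x + r ^ n • y := by
  have hpr' : p - r ≠ 0 := sub_ne_zero.mpr hpr
  induction n with
  | zero => simp
  | succ n ih =>
    rw [pow_succ', ← mulVec_mulVec, ih, mulVec_add, mulVec_smul, mulVec_smul, hx, hy,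
      smul_add, smul_smul, smul_smul, smul_smul, ← add_assoc, ← add_smul]
    congr 2
    · field_simp
      ring
    · exact (pow_succ r n).symm

end Triangular

theorem quadratic_lower_bound {a b p r : ℝ} (ha : 0 ≤ a) (hb : 0 ≤ b) :
    (p / 2) ^ 2 * (a ^ 2 + a * b + b ^ 2) ≤
      (p * a + (p - r) / 2 * b) ^ 2 + (p * a + (p - r) / 2 * b) * (r * b) + (r * b) ^ 2 := by
  have hsplit : (p * a + (p - r) / 2 * b) ^ 2 + (p * a + (p - r) / 2 * b) * (r * b) + (r * b) ^ 2 =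
      (p / 2) ^ 2 * (a ^ 2 + a * b + b ^ 2) + 3/4 * ((p * a) ^ 2 + p ^ 2 * (a * b) + (r * b) ^ 2) := by
    ring
  have hab := mul_nonneg ha hb
  rw [hsplit]
  exact le_add_of_nonneg_right (by positivity)

theorem M0_mulVec_v0 : M0 *ᵥ v0 = (3/5 : ℝ) • v0 := by
  ext i; fin_cases i <;> simp [M0, v0, mulVec, dotProduct, Fin.sum_univ_three] <;> norm_num

theorem M0_mulVec_v1 : M0 *ᵥ v1 = (1/5 : ℝ) • v0 + (1/5 : ℝ) • v1 := by
  ext i; fin_cases i <;> simp [M0, v0, v1, mulVec, dotProduct, Fin.sum_univ_three] <;> norm_num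

theorem M1_mulVec_v1 : M1 *ᵥ v1 = (3/5 : ℝ) • v1 := by
  ext i; fin_cases i <;> simp [M1, v1, mulVec, dotProduct, Fin.sum_univ_three] <;> norm_num

theorem M1_mulVec_v0 : M1 *ᵥ v0 = (1/5 : ℝ) • v1 + (1/5 : ℝ) • v0 := by
  ext i; fin_cases i <;> simp [M1, v0, v1, mulVec, dotProduct, Fin.sum_univ_three] <;> norm_num

theorem norm2_smul_v0_add_smul_v1 (a b : ℝ) :
    norm2 (a • v0 + b • v1) = √(3/2 * (a ^ 2 + a * b + b ^ 2)) := by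
  simp only [norm2, v0, v1]
  congr 1
  simp
  ring

theorem norm2_smul_v1_add_smul_v0 (a b : ℝ) :
    norm2 (a • v1 + b • v0) = √(3/2 * (a ^ 2 + a * b + b ^ 2)) := by
  rw [add_comm, norm2_smul_v0_add_smul_v1]
  ring_nf

/-- The common shape of the two cases: `(x, y)` is `(v0, v1)` for `M0` and `(v1, v0)` for `M1`. -/
theorem norm2_pow_mulVec_ge {M : Matrix (Fin 3) (Fin 3) ℝ} {x y : Fin 3 → ℝ}
    (hnorm : ∀ a b : ℝ, norm2 (a • x + b • y) = √(3/2 * (a ^ 2 + a * b + b ^ 2)))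
    (hx : M *ᵥ x = (3/5 : ℝ) • x) (hy : M *ᵥ y = (1/5 : ℝ) • x + (1/5 : ℝ) • y)
    {a b : ℝ} (ha : 0 ≤ a) (hb : 0 ≤ b) (n : ℕ) :
    1/2 * (3/5 : ℝ) ^ n * norm2 (a • x + b • y) ≤ norm2 ((M ^ n) *ᵥ (a • x + b • y)) := by
  have hpow : (M ^ n) *ᵥ (a • x + b • y) =
      ((3/5 : ℝ) ^ n * a + ((3/5 : ℝ) ^ n - (1/5) ^ n) / 2 * b) • x + ((1/5 : ℝ) ^ n * b) • y := by
    rw [mulVec_add, mulVec_smul, mulVec_smul, pow_mulVec_of_mulVec_eq_smul hx,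
      pow_mulVec_of_mulVec_eq_smul_add_smul (by norm_num) hx hy]
    module
  rw [hpow, hnorm, hnorm, ← Real.sqrt_sq (by positivity : (0 : ℝ) ≤ 1/2 * (3/5) ^ n),
    ← Real.sqrt_mul (sq_nonneg _)]
  apply Real.sqrt_le_sqrt
  linarith [quadratic_lower_bound (p := (3/5 : ℝ) ^ n) (r := (1/5) ^ n) ha hb]

theorem stmt_13 (u : Fin 3 → ℝ) (hu : u ∈ Kvec) (M : Matrix (Fin 3) (Fin 3) ℝ)
    (hM : M = M0 ∨ M = M1) (n : ℕ) :
    norm2 ((M ^ n).mulVec u) ≥ (1/2 : ℝ) * (3/5 : ℝ) ^ n * norm2 u := by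
  obtain ⟨a, b, ha, hb, -, rfl⟩ := hu
  rcases hM with rfl | rfl
  · exact norm2_pow_mulVec_ge norm2_smul_v0_add_smul_v1 M0_mulVec_v0 M0_mulVec_v1 ha hb n
  · rw [add_comm]
    exact norm2_pow_mulVec_ge norm2_smul_v1_add_smul_v0 M1_mulVec_v1 M1_mulVec_v0 hb ha n
end
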